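/- If the hyperspace system (K(X), T_K) is pointwise positively recurrent, then (X,T) is positively weakly rigid, i.e. (Xⁿ, T×⋯×T) is pointwise positively recurrent for every n ∈ ℕ. -/
import Mathlib

open TopologicalSpace Metric Set

/-- The induced map `T_K` on the hyperspace of nonempty compact subsets. -/
noncomputable def inducedMap {X : Type*} [MetricSpace X] {T : X → X} (hT : Continuous T)
    (A : NonemptyCompacts X) : NonemptyCompacts X :=
  ⟨⟨T '' A, A.isCompact.image hT⟩, A.nonempty.image T⟩

/-- A point `x` is positively recurrent for `T`. -/
def RecurrentPt {Y : Type*} [MetricSpace Y] (T : Y → Y) (x : Y) : Prop :=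
  ∀ ε > (0:ℝ), ∀ N : ℕ, ∃ m ≥ N, dist (T^[m] x) x < ε

/-! ### Auxiliary definitions and lemmas -/

lemma inducedMap_iterate_coe {X : Type*} [MetricSpace X] {T : X → X} (hT : Continuous T)
    (A : NonemptyCompacts X) (m : ℕ) :
    (((inducedMap hT)^[m] A : NonemptyCompacts X) : Set X) = T^[m] '' (A : Set X) := by
  induction m with
  | zero => simp
  | succ m ih =>
    rw [Function.iterate_succ_apply']
    show T '' (((inducedMap hT)^[m] A : NonemptyCompacts X) : Set X) = _
    rw [ih, Function.iterate_succ', Set.image_comp]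

lemma iter_modulus {X : Type*} [MetricSpace X] [CompactSpace X] {T : X → X}
    (hT : Continuous T) (M : ℕ) {η : ℝ} (hη : 0 < η) :
    ∃ d > 0, ∀ j ≤ M, ∀ u v : X, dist u v < d → dist (T^[j] u) (T^[j] v) < η := by
  induction M with
  | zero =>
    refine ⟨η, hη, ?_⟩
    intro j hj u v huv
    interval_cases j
    simpa using huv
  | succ M ih =>
    obtain ⟨d, hd, hdp⟩ := ih
    have hc : Continuous (T^[M + 1]) := hT.iterate _
    have huc := CompactSpace.uniformContinuous_of_continuous hc
    rw [Metric.uniformContinuous_iff] at huc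
    obtain ⟨d', hd', hd'p⟩ := huc η hη
    refine ⟨min d d', lt_min hd hd', ?_⟩
    intro j hj u v huv
    rcases Nat.lt_or_ge j (M + 1) with hlt | hge
    · exact hdp j (Nat.lt_succ_iff.mp hlt) u v (huv.trans_le (min_le_left _ _))
    · have hje : j = M + 1 := le_antisymm hj hge
      subst hje
      exact hd'p (huv.trans_le (min_le_right _ _))

/-- Composition `σ (s+1) ∘ ... ∘ σ t` written as `segComp σ s t` (in the order
`segComp σ s t = segComp σ s (t-1) ∘ σ t`). -/
def segComp {n : ℕ} (σ : ℕ → Fin n → Fin n) (s : ℕ) : ℕ → Fin n → Fin n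
  | 0 => id
  | t + 1 => if s ≤ t then segComp σ s t ∘ σ (t + 1) else segComp σ s t

lemma segComp_succ {n : ℕ} (σ : ℕ → Fin n → Fin n) (s t : ℕ) :
    segComp σ s (t + 1) = if s ≤ t then segComp σ s t ∘ σ (t + 1) else segComp σ s t := rfl

lemma segComp_of_le {n : ℕ} (σ : ℕ → Fin n → Fin n) {s t : ℕ} (h : t ≤ s) :
    segComp σ s t = id := by
  induction t with
  | zero => rfl
  | succ t ih =>
    rw [segComp_succ, if_neg (by omega), ih (by omega)]

lemma segComp_succ_of_le {n : ℕ} (σ : ℕ → Fin n → Fin n) {s t : ℕ} (h : s ≤ t) :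
    segComp σ s (t + 1) = segComp σ s t ∘ σ (t + 1) := by
  rw [segComp_succ, if_pos h]

/-- partial sums of `m (l+1)` -/
def partialSum (m : ℕ → ℕ) (j : ℕ) : ℕ := (Finset.range j).sum fun l => m (l + 1)

lemma partialSum_succ (m : ℕ → ℕ) (j : ℕ) :
    partialSum m (j + 1) = partialSum m j + m (j + 1) :=
  Finset.sum_range_succ _ j

lemma partialSum_mono (m : ℕ → ℕ) {s t : ℕ} (h : s ≤ t) :
    partialSum m s ≤ partialSum m t :=
  Finset.sum_le_sum_of_subset (Finset.range_subset_range.mpr h)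

theorem pos_weakly_rigid_of_pointwise_recurrent_induced {X : Type*} [MetricSpace X]
    [CompactSpace X] (T : X → X) (hT : Continuous T) (hsurj : Function.Surjective T)
    (h : ∀ A : NonemptyCompacts X, RecurrentPt (inducedMap hT) A) :
    ∀ n : ℕ, ∀ x : Fin n → X, RecurrentPt (fun f i => T (f i)) x := by
  classical
  intro n x ε hε N
  -- iterate of the product map
  have hiter : ∀ m : ℕ, (fun f (i : Fin n) => T (f i))^[m] x = fun i => T^[m] (x i) := by
    intro m
    induction m with
    | zero => rfl
    | succ m ih =>
      rw [Function.iterate_succ_apply', ih]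
      funext i
      rw [Function.iterate_succ_apply']
  rcases isEmpty_or_nonempty (Fin n) with hn | hn
  · refine ⟨N, le_rfl, ?_⟩
    rw [hiter, dist_pi_lt_iff hε]
    intro i
    exact (IsEmpty.false i).elim
  -- separation constant
  obtain ⟨γ, hγ0, hγ⟩ : ∃ γ : ℝ, 0 < γ ∧ ∀ i j : Fin n, dist (x i) (x j) < γ → x i = x j := by
    set S : Finset ℝ := (Finset.univ.filter fun p : Fin n × Fin n => x p.1 ≠ x p.2).image
      (fun p : Fin n × Fin n => dist (x p.1) (x p.2)) with hS
    rcases S.eq_empty_or_nonempty with hSe | hSe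
    · refine ⟨1, one_pos, fun i j _ => ?_⟩
      by_contra hne
      have hmem : dist (x i) (x j) ∈ S :=
        Finset.mem_image.mpr ⟨(i, j), Finset.mem_filter.mpr ⟨Finset.mem_univ _, hne⟩, rfl⟩
      rw [hSe] at hmem
      exact absurd hmem (Finset.notMem_empty _)
    · refine ⟨S.min' hSe, ?_, ?_⟩
      · obtain ⟨p, hp, hpe⟩ := Finset.mem_image.mp (S.min'_mem hSe)
        have hne := (Finset.mem_filter.mp hp).2
        rw [← hpe]
        exact dist_pos.mpr hne
      · intro i j hd
        by_contra hne
        have hmem : dist (x i) (x j) ∈ S :=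
          Finset.mem_image.mpr ⟨(i, j), Finset.mem_filter.mpr ⟨Finset.mem_univ _, hne⟩, rfl⟩
        exact absurd hd (not_lt.mpr (S.min'_le _ hmem))
  set δ : ℝ := min ε γ / 2 with hδdef
  have hδ0 : 0 < δ := half_pos (lt_min hε hγ0)
  have hδγ : 2 * δ ≤ γ := by
    have := min_le_right ε γ
    rw [hδdef]; linarith
  have hδε : δ < ε := by
    have := min_le_left ε γ
    rw [hδdef]; linarith
  -- the set of points of the tuple
  have hxr : (Set.range x).Nonempty := Set.range_nonempty x
  have hfin : (Set.range x).Finite := Set.finite_range x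
  let A : NonemptyCompacts X := ⟨⟨Set.range x, hfin.isCompact⟩, hxr⟩
  have hgood : ∀ β > (0:ℝ), ∀ N' : ℕ, ∃ m ≥ N',
      (∀ i, ∃ j, dist (T^[m] (x i)) (x j) < β) ∧
      (∀ j, ∃ i, dist (T^[m] (x i)) (x j) < β) := by
    intro β hβ N'
    obtain ⟨m, hm, hd⟩ := h A β hβ N'
    rw [NonemptyCompacts.dist_eq, inducedMap_iterate_coe] at hd
    have hAco : (A : Set X) = Set.range x := rfl
    rw [hAco] at hd
    have hne : EMetric.hausdorffEdist (T^[m] '' Set.range x) (Set.range x) ≠ ⊤ :=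
      Metric.hausdorffEdist_ne_top_of_nonempty_of_bounded (hxr.image _) hxr
        ((hfin.image _).isBounded) hfin.isBounded
    refine ⟨m, hm, ?_, ?_⟩
    · intro i
      obtain ⟨y, hy, hyd⟩ := Metric.exists_dist_lt_of_hausdorffDist_lt
        (Set.mem_image_of_mem _ (Set.mem_range_self i)) hd hne
      obtain ⟨j, rfl⟩ := hy
      exact ⟨j, hyd⟩
    · intro j
      obtain ⟨z, hz, hzd⟩ := Metric.exists_dist_lt_of_hausdorffDist_lt'
        (Set.mem_range_self j) hd hne
      obtain ⟨w, hw, rfl⟩ := hz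
      obtain ⟨i, rfl⟩ := hw
      exact ⟨i, hzd⟩
  -- the main recursive construction
  have KEY : ∀ R : ℕ, ∃ (m : ℕ → ℕ) (σ : ℕ → Fin n → Fin n),
      ∀ j, 1 ≤ j → j ≤ R →
        N ≤ m j ∧
        (∀ i i', x i = x i' → x (σ j i) = x (σ j i')) ∧
        (∀ i', ∃ i, x (σ j i) = x i') ∧
        (∀ k ≤ partialSum m (j - 1), ∀ i,
          dist (T^[k + m j] (x i)) (T^[k] (x (σ j i))) < δ / 2 ^ j) := by
    intro R
    induction R with
    | zero =>
      exact ⟨fun _ => N, fun _ => id, fun j h1 h0 => (Nat.not_succ_le_zero 0 (h1.trans h0)).elim⟩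
    | succ R ih =>
      obtain ⟨m, σ, H⟩ := ih
      obtain ⟨d, hd0, hdmod⟩ := iter_modulus hT (partialSum m R)
        (η := δ / 2 ^ (R + 1)) (by positivity)
      set β := min d δ with hβdef
      have hβ0 : 0 < β := lt_min hd0 hδ0
      obtain ⟨mnew, hmnewN, hg1, hg2⟩ := hgood β hβ0 N
      choose σnew hσnew using hg1
      refine ⟨Function.update m (R + 1) mnew, Function.update σ (R + 1) σnew, ?_⟩
      intro j h1 hj
      have hMS : partialSum (Function.update m (R + 1) mnew) (j - 1) = partialSum m (j - 1) := by
        apply Finset.sum_congr rfl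
        intro l hl
        have hll := Finset.mem_range.mp hl
        have : l + 1 ≠ R + 1 := by omega
        rw [Function.update_of_ne this]
      rcases Nat.lt_or_ge j (R + 1) with hlt | hge
      · have hne : j ≠ R + 1 := by omega
        simp only [Function.update_of_ne hne, hMS]
        exact H j h1 (by omega)
      · have hje : j = R + 1 := by omega
        subst hje
        simp only [Function.update_self, hMS]
        have hββ : β + β ≤ γ := by
          have := min_le_right d δ
          rw [hβdef]; linarith
      -- here `partialSum m (R + 1 - 1) = partialSum m R`
        refine ⟨hmnewN, ?_, ?_, ?_⟩
        · intro i i' hxe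
          have h1' := hσnew i
          have h2' := hσnew i'
          rw [hxe] at h1'
          apply hγ
          calc dist (x (σnew i)) (x (σnew i'))
              ≤ dist (x (σnew i)) (T^[mnew] (x i')) + dist (T^[mnew] (x i')) (x (σnew i')) :=
                dist_triangle _ _ _
            _ < β + β := by rw [dist_comm]; exact add_lt_add h1' h2'
            _ ≤ γ := hββ
        · intro j'
          obtain ⟨i, hi⟩ := hg2 j'
          refine ⟨i, hγ _ _ ?_⟩
          calc dist (x (σnew i)) (x j')
              ≤ dist (x (σnew i)) (T^[mnew] (x i)) + dist (T^[mnew] (x i)) (x j') :=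
                dist_triangle _ _ _
            _ < β + β := by rw [dist_comm]; exact add_lt_add (hσnew i) hi
            _ ≤ γ := hββ
        · intro k hk i
          rw [Function.iterate_add_apply]
          exact hdmod k (by simpa using hk) _ _ ((hσnew i).trans_le (min_le_left _ _))
  -- get the sequence for R0 stages
  haveI := hfin.fintype
  set R0 := Fintype.card (Fin n → ↥(Set.range x)) with hR0
  obtain ⟨m, σ, H⟩ := KEY R0
  set M : ℕ → ℕ := fun j => partialSum m j with hMdef
  have hMsucc : ∀ j, M (j + 1) = M j + m (j + 1) := fun j => partialSum_succ m j
  have hMmono : ∀ s t, s ≤ t → M s ≤ M t := fun s t hst => partialSum_mono m hst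
  -- properties of segment compositions
  have hP : ∀ s t, s ≤ t → t ≤ R0 →
      (∀ i i', x i = x i' → x (segComp σ s t i) = x (segComp σ s t i')) ∧
      (∀ i', ∃ i, x (segComp σ s t i) = x i') := by
    intro s t hst
    induction t, hst using Nat.le_induction with
    | base =>
      intro _
      rw [segComp_of_le σ le_rfl]
      exact ⟨fun i i' hh => hh, fun i' => ⟨i', rfl⟩⟩
    | succ t hst ih =>
      intro htR
      obtain ⟨ih1, ih2⟩ := ih (by omega)
      obtain ⟨-, hp1, hp2, -⟩ := H (t + 1) (by omega) htR
      rw [segComp_succ_of_le σ hst]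
      constructor
      · intro i i' he
        exact ih1 _ _ (hp1 _ _ he)
      · intro i'
        obtain ⟨i1, hi1⟩ := ih2 i'
        obtain ⟨i0, hi0⟩ := hp2 i1
        exact ⟨i0, by simpa [Function.comp] using (ih1 _ _ hi0).trans hi1⟩
  -- decomposition
  have hdec : ∀ s t, s ≤ t → segComp σ 0 t = segComp σ 0 s ∘ segComp σ s t := by
    intro s t hst
    induction t, hst using Nat.le_induction with
    | base => rw [segComp_of_le σ le_rfl]; rfl
    | succ t hst ih =>
      rw [segComp_succ_of_le σ (Nat.zero_le _), segComp_succ_of_le σ hst, ih]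
      rfl
  -- segment distance estimate
  have hSEG : ∀ s t, s ≤ t → t ≤ R0 → ∀ k ≤ M s, ∀ i,
      dist (T^[k + (M t - M s)] (x i)) (T^[k] (x (segComp σ s t i)))
        ≤ δ * (1 / 2 ^ s - 1 / 2 ^ t) := by
    intro s t hst
    induction t, hst using Nat.le_induction with
    | base =>
      intro _ k hk i
      rw [segComp_of_le σ le_rfl]
      simp [Nat.sub_self]
    | succ t hst ih =>
      intro htR k hk i
      obtain ⟨-, -, -, hC⟩ := H (t + 1) (by omega) htR
      have hMle : M s ≤ M t := hMmono s t hst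
      have hMs := hMsucc t
      have harith : k + (M (t + 1) - M s) = (k + (M t - M s)) + m (t + 1) := by omega
      rw [segComp_succ_of_le σ hst, harith]
      have hk' : k + (M t - M s) ≤ partialSum m (t + 1 - 1) := by
        have : partialSum m (t + 1 - 1) = M t := rfl
        omega
      have h1 := hC (k + (M t - M s)) hk' i
      have h2 := ih (by omega) k hk (σ (t + 1) i)
      simp only [Function.comp_apply]
      calc dist (T^[(k + (M t - M s)) + m (t + 1)] (x i))
            (T^[k] (x (segComp σ s t (σ (t + 1) i))))
          ≤ dist (T^[(k + (M t - M s)) + m (t + 1)] (x i))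
              (T^[k + (M t - M s)] (x (σ (t + 1) i)))
            + dist (T^[k + (M t - M s)] (x (σ (t + 1) i)))
              (T^[k] (x (segComp σ s t (σ (t + 1) i)))) := dist_triangle _ _ _
        _ ≤ δ / 2 ^ (t + 1) + δ * (1 / 2 ^ s - 1 / 2 ^ t) := add_le_add h1.le h2
        _ = δ * (1 / 2 ^ s - 1 / 2 ^ (t + 1)) := by ring
  -- the final argument for a pair s < t with matching compositions
  have FINAL : ∀ s t : ℕ, s < t → t ≤ R0 →
      (∀ i, x (segComp σ 0 s i) = x (segComp σ 0 t i)) →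
      ∃ m' ≥ N, ∀ i, dist (T^[m'] (x i)) (x i) < ε := by
    intro s t hst htR heqc
    have hstle := hst.le
    obtain ⟨hp1s, hp2s⟩ := hP 0 s (Nat.zero_le _) (by omega)
    -- injectivity (mod points) of `segComp σ 0 s`
    have hinj : ∀ i i', x (segComp σ 0 s i) = x (segComp σ 0 s i') → x i = x i' := by
      set F : ↥(Set.range x) → ↥(Set.range x) :=
        fun a => ⟨x (segComp σ 0 s (a.2.choose)), Set.mem_range_self _⟩ with hF
      have hFval : ∀ (i : Fin n) (hm : x i ∈ Set.range x),
          (F ⟨x i, hm⟩ : X) = x (segComp σ 0 s i) := by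
        intro i hm
        exact hp1s _ _ hm.choose_spec
      have hFsurj : Function.Surjective F := by
        rintro ⟨y, hy⟩
        obtain ⟨j, rfl⟩ := hy
        obtain ⟨i, hi⟩ := hp2s j
        exact ⟨⟨x i, Set.mem_range_self _⟩, Subtype.ext (by rw [hFval]; exact hi)⟩
      have hFinj : Function.Injective F := Finite.injective_iff_surjective.mpr hFsurj
      intro i i' he
      have hFe : F ⟨x i, Set.mem_range_self _⟩ = F ⟨x i', Set.mem_range_self _⟩ :=
        Subtype.ext (by rw [hFval, hFval]; exact he)
      have := hFinj hFe
      exact congrArg Subtype.val this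
    have hfix : ∀ i, x (segComp σ s t i) = x i := by
      intro i
      apply hinj
      calc x (segComp σ 0 s (segComp σ s t i))
          = x (segComp σ 0 t i) := by rw [hdec s t hstle]; rfl
        _ = x (segComp σ 0 s i) := (heqc i).symm
    refine ⟨M t - M s, ?_, ?_⟩
    · have h1 : N ≤ m (s + 1) := (H (s + 1) (by omega) (by omega)).1
      have h2 : M (s + 1) ≤ M t := hMmono _ _ (by omega)
      have h3 := hMsucc s
      omega
    · intro i
      have hs := hSEG s t hstle htR 0 (Nat.zero_le _) i
      rw [Nat.zero_add] at hs
      simp only [Function.iterate_zero, id_eq] at hs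
      rw [hfix i] at hs
      have hb : δ * (1 / 2 ^ s - 1 / 2 ^ t) < ε := by
        have h1 : (0:ℝ) < 1 / 2 ^ t := by positivity
        have h2 : (1:ℝ) / 2 ^ s ≤ 1 := by
          rw [div_le_one (by positivity)]
          exact one_le_pow₀ (by norm_num)
        nlinarith
      linarith
  -- pigeonhole
  have hcard : Fintype.card (Fin n → ↥(Set.range x)) < Fintype.card (Fin (R0 + 1)) := by
    rw [Fintype.card_fin]
    omega
  obtain ⟨a, b, hab, heq⟩ := Fintype.exists_ne_map_eq_of_card_lt
    (fun r : Fin (R0 + 1) => fun i =>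
      (⟨x (segComp σ 0 (r : ℕ) i), Set.mem_range_self _⟩ : ↥(Set.range x))) hcard
  have heq' : ∀ i, x (segComp σ 0 (a : ℕ) i) = x (segComp σ 0 (b : ℕ) i) :=
    fun i => congrArg Subtype.val (congrFun heq i)
  have hfin' : ∃ m' ≥ N, ∀ i, dist (T^[m'] (x i)) (x i) < ε := by
    rcases lt_or_gt_of_ne hab with hlt | hgt
    · exact FINAL (a : ℕ) (b : ℕ) hlt (by omega) heq'
    · exact FINAL (b : ℕ) (a : ℕ) hgt (by omega) (fun i => (heq' i).symm)
  obtain ⟨m', hm', hd'⟩ := hfin'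
  refine ⟨m', hm', ?_⟩
  rw [hiter, dist_pi_lt_iff hε]
  exact hd'
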